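/- Under Assumptions A7 and A9, if the estimator θ̃ⁿ satisfies limsup_{n→∞} ℙ_{θ₁}(θ̃ⁿ ≠ θ₁) < 1 for every θ₁ ∈ Θ∖{θ₀} (data i.i.d. with law ℙ_{θ₁}), then liminf_{n→∞} (1/n) ln ℙ_{θ₀}(θ̃ⁿ ≠ θ₀) ≥ sup_{θ₁ ∈ Θ∖{θ₀}} E_{θ₁} ln( f_Y(Y; θ₀)/f_Y(Y; θ₁) ). -/

import Mathlib

/-! With `Sₙ = ∑ᵢ ln (f(Yᵢ;θ₀)/f(Yᵢ;θ₁))` and `m = E_{θ₁} ln (f(Y;θ₀)/f(Y;θ₁))`: since `x ≤ eˣ`,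
the positive part of the log-ratio has `ℙ_{θ₁}`-expectation at most `E_{θ₁} f(Y;θ₀)/f(Y;θ₁) = 1`,
so either `m = -∞` or the log-ratio is integrable. In the latter case fix `c < m`. The law of
large numbers gives `ℙ_{θ₁}(Sₙ < n c) → 0`, and partial consistency keeps `ℙ_{θ₁}(θ̃ⁿ = θ₁) ≥ η > 0`
eventually. As `ℙ_{θ₀}^{⊗n}` has density `e^{Sₙ}` with respect to `ℙ_{θ₁}^{⊗n}`,
`ℙ_{θ₀}(θ̃ⁿ ≠ θ₀) ≥ ℙ_{θ₀}(θ̃ⁿ = θ₁) ≥ e^{n c} (ℙ_{θ₁}(θ̃ⁿ = θ₁) - ℙ_{θ₁}(Sₙ < n c))`,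
which is at least `e^{n c} η / 2` for large `n`; hence the liminf is at least `c`. -/

open MeasureTheory ProbabilityTheory Filter
open scoped ENNReal NNReal

/-- The probability measure with density `f θ` with respect to `μ` (Assumption A7). -/
noncomputable def densModel {𝔜 Θ : Type*} [MeasurableSpace 𝔜]
    (μ : Measure 𝔜) (f : Θ → 𝔜 → ℝ) (θ : Θ) : Measure 𝔜 :=
  μ.withDensity fun y => ENNReal.ofReal (f θ y)

/-- The extended-real-valued expectation `E_ρ[g]`, defined as the difference of the
Lebesgue integrals of the positive and negative parts. -/
noncomputable def extExp {𝔜 : Type*} [MeasurableSpace 𝔜]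
    (ρ : Measure 𝔜) (g : 𝔜 → ℝ) : EReal :=
  ((∫⁻ y, ENNReal.ofReal (g y) ∂ρ : ℝ≥0∞) : EReal) -
    ((∫⁻ y, ENNReal.ofReal (-g y) ∂ρ : ℝ≥0∞) : EReal)

open scoped Topology

section

variable {α : Type*} [MeasurableSpace α]

theorem integrable_of_lintegral_ofReal_ne_top {ρ : Measure α} {g : α → ℝ}
    (hg : AEMeasurable g ρ) (hpos : ∫⁻ y, ENNReal.ofReal (g y) ∂ρ ≠ ∞)
    (hneg : ∫⁻ y, ENNReal.ofReal (-g y) ∂ρ ≠ ∞) : Integrable g ρ := by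
  refine ((integrable_toReal_of_lintegral_ne_top hg.ennreal_ofReal hpos).sub
    (integrable_toReal_of_lintegral_ne_top hg.neg.ennreal_ofReal hneg)).congr
    (ae_of_all _ fun y => ?_)
  simp only [Pi.sub_apply, ENNReal.toReal_ofReal']
  exact max_zero_sub_max_neg_zero_eq_self (g y)

theorem extExp_eq_integral {ρ : Measure α} {g : α → ℝ} (hg : Integrable g ρ) :
    extExp ρ g = ((∫ y, g y ∂ρ : ℝ) : EReal) := by
  rw [integral_eq_lintegral_pos_part_sub_lintegral_neg_part hg, EReal.coe_sub,
    EReal.coe_ennreal_toReal, EReal.coe_ennreal_toReal, extExp]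
  · exact hg.neg.lintegral_lt_top.ne
  · exact hg.lintegral_lt_top.ne

theorem extExp_le_of_integrable_imp {ρ : Measure α} {g : α → ℝ} (hg : AEMeasurable g ρ)
    (hpos : ∫⁻ y, ENNReal.ofReal (g y) ∂ρ ≠ ∞) {x : EReal}
    (h : Integrable g ρ → ((∫ y, g y ∂ρ : ℝ) : EReal) ≤ x) : extExp ρ g ≤ x := by
  by_cases hneg : ∫⁻ y, ENNReal.ofReal (-g y) ∂ρ = ∞
  · simp [extExp, hneg]
  · have hgi := integrable_of_lintegral_ofReal_ne_top hg hpos hneg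
    exact (extExp_eq_integral hgi).trans_le (h hgi)

theorem withDensity_ofReal_eq_withDensity_exp_log_div (μ : Measure α) {f₀ f₁ : α → ℝ}
    (hf₀ : Measurable f₀) (hf₁ : Measurable f₁) (h₀ : ∀ y, 0 < f₀ y) (h₁ : ∀ y, 0 < f₁ y) :
    μ.withDensity (fun y => ENNReal.ofReal (f₀ y))
      = (μ.withDensity fun y => ENNReal.ofReal (f₁ y)).withDensity
          fun y => ENNReal.ofReal (Real.exp (Real.log (f₀ y / f₁ y))) := by
  rw [← withDensity_mul _ (by fun_prop) (by fun_prop)]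
  congr with y
  rw [Pi.mul_apply, Real.exp_log (div_pos (h₀ y) (h₁ y)), ← ENNReal.ofReal_mul (h₁ y).le,
    mul_div_cancel₀ _ (h₁ y).ne']

theorem lintegral_ofReal_le_withDensity_exp_univ (ν : Measure α) (g : α → ℝ) :
    ∫⁻ y, ENNReal.ofReal (g y) ∂ν
      ≤ ν.withDensity (fun y => ENNReal.ofReal (Real.exp (g y))) Set.univ := by
  rw [withDensity_apply _ .univ, Measure.restrict_univ]
  exact lintegral_mono fun y =>
    ENNReal.ofReal_le_ofReal ((lt_add_one _).le.trans (Real.add_one_le_exp _))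

theorem MeasureTheory.Measure.pi_withDensity {ι : Type*} [Fintype ι] {E : ι → Type*}
    [∀ i, MeasurableSpace (E i)] (ν : ∀ i, Measure (E i)) [∀ i, IsProbabilityMeasure (ν i)]
    {w : ∀ i, E i → ℝ≥0∞} (hw : ∀ i, Measurable (w i))
    [∀ i, SigmaFinite ((ν i).withDensity (w i))] :
    Measure.pi (fun i => (ν i).withDensity (w i))
      = (Measure.pi ν).withDensity fun y => ∏ i, w i (y i) := by
  refine Measure.pi_eq fun s hs => ?_
  have hind : (Set.univ.pi s).indicator (fun y => ∏ i, w i (y i))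
      = fun y => ∏ i, (s i).indicator (w i) (y i) := by
    ext y
    by_cases hy : y ∈ Set.univ.pi s
    · simp_all [Set.indicator_of_mem]
    · obtain ⟨i, hi⟩ : ∃ i, y i ∉ s i := by simpa [Set.mem_pi] using hy
      simp [Set.indicator_of_notMem hy, Finset.prod_eq_zero (Finset.mem_univ i), hi]
  rw [withDensity_apply _ (.univ_pi hs), ← lintegral_indicator (.univ_pi hs), hind,
    lintegral_prod_eq_prod_lintegral_of_indepFun _ _
      (iIndepFun_pi fun i => ((hw i).indicator (hs i)).aemeasurable)
      fun i => ((hw i).indicator (hs i)).comp (measurable_pi_apply i)]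
  refine Finset.prod_congr rfl fun i _ => ?_
  rw [(measurePreserving_eval ν i).lintegral_comp ((hw i).indicator (hs i)),
    lintegral_indicator (hs i), withDensity_apply _ (hs i)]

theorem MeasureTheory.Measure.pi_withDensity_ofReal_exp {ι : Type*} [Fintype ι]
    (ν : Measure α) [IsProbabilityMeasure ν] {g : α → ℝ} (hg : Measurable g)
    [SigmaFinite (ν.withDensity fun y => ENNReal.ofReal (Real.exp (g y)))] :
    Measure.pi (fun _ : ι => ν.withDensity fun y => ENNReal.ofReal (Real.exp (g y)))
      = (Measure.pi fun _ => ν).withDensity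
          fun y => ENNReal.ofReal (Real.exp (∑ i, g (y i))) := by
  rw [Measure.pi_withDensity (fun _ => ν) fun _ => by fun_prop]
  congr with y
  rw [Real.exp_sum, ENNReal.ofReal_prod_of_nonneg fun i _ => (Real.exp_pos _).le]

theorem ofReal_exp_mul_sub_le_withDensity_exp (Q : Measure α) {S : α → ℝ} (hS : Measurable S)
    (B : Set α) (t : ℝ) :
    ENNReal.ofReal (Real.exp t) * (Q B - Q {y | S y < t})
      ≤ Q.withDensity (fun y => ENNReal.ofReal (Real.exp (S y))) B :=
  calc ENNReal.ofReal (Real.exp t) * (Q B - Q {y | S y < t})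
      ≤ ENNReal.ofReal (Real.exp t) * Q (B \ {y | S y < t}) := by gcongr; exact le_measure_sdiff
    _ = ∫⁻ _ in B \ {y | S y < t}, ENNReal.ofReal (Real.exp t) ∂Q := (setLIntegral_const _ _).symm
    _ ≤ ∫⁻ y in B \ {y | S y < t}, ENNReal.ofReal (Real.exp (S y)) ∂Q :=
        setLIntegral_mono (by fun_prop) fun y hy =>
          ENNReal.ofReal_le_ofReal (Real.exp_le_exp.mpr (not_lt.mp hy.2))
    _ ≤ Q.withDensity (fun y => ENNReal.ofReal (Real.exp (S y))) (B \ {y | S y < t}) :=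
        withDensity_apply_le _ _
    _ ≤ Q.withDensity (fun y => ENNReal.ofReal (Real.exp (S y))) B := measure_mono Set.sdiff_subset

theorem ofReal_exp_mul_sub_le_pi_of_eq_withDensity {ι : Type*} [Fintype ι] {P₀ P₁ : Measure α}
    [IsProbabilityMeasure P₁] [SigmaFinite P₀] {g : α → ℝ} (hg : Measurable g)
    (hP₀ : P₀ = P₁.withDensity fun y => ENNReal.ofReal (Real.exp (g y))) (B : Set (ι → α))
    (t : ℝ) :
    ENNReal.ofReal (Real.exp t) *
        (Measure.pi (fun _ : ι => P₁) B - Measure.pi (fun _ : ι => P₁) {y | ∑ i, g (y i) < t})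
      ≤ Measure.pi (fun _ : ι => P₀) B := by
  subst hP₀
  rw [Measure.pi_withDensity_ofReal_exp _ hg]
  exact ofReal_exp_mul_sub_le_withDensity_exp _ (by fun_prop) _ _

theorem MeasureTheory.Measure.infinitePi_map_fin (P : Measure α) [IsProbabilityMeasure P] (n : ℕ) :
    (Measure.infinitePi fun _ : ℕ => P).map (fun ω (i : Fin n) => ω i)
      = Measure.pi fun _ : Fin n => P := by
  rw [Measure.map_infinitePi_infinitePi_of_inj Fin.val_injective, Measure.infinitePi_eq_pi]

theorem tendsto_measure_pi_sum_lt_of_lt_integral (P : Measure α) [IsProbabilityMeasure P]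
    {g : α → ℝ} (hgm : Measurable g) (hg : Integrable g P) {c : ℝ} (hc : c < ∫ x, g x ∂P) :
    Tendsto (fun n : ℕ => (Measure.pi fun _ : Fin n => P) {y | ∑ i, g (y i) < n * c})
      atTop (𝓝 0) := by
  set Q := Measure.infinitePi fun _ : ℕ => P
  set X : ℕ → (ℕ → α) → ℝ := fun i ω => g (ω i)
  have hident : ∀ i, IdentDistrib (X i) (X 0) Q Q := fun i =>
    (IdentDistrib.mk (measurable_pi_apply i).aemeasurable (measurable_pi_apply 0).aemeasurable
      (by rw [Measure.infinitePi_map_eval, Measure.infinitePi_map_eval])).comp hgm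
  have hmean : Q[X 0] = ∫ x, g x ∂P := by
    rw [← Measure.infinitePi_map_eval (fun _ : ℕ => P) 0,
      integral_map (measurable_pi_apply 0).aemeasurable (by
        rw [Measure.infinitePi_map_eval]; exact hg.aestronglyMeasurable)]
  have hslln := strong_law_ae_real X
    ((measurePreserving_eval_infinitePi _ 0).integrable_comp_of_integrable hg)
    (fun i j hij => (iIndepFun_infinitePi (P := fun _ => P) (X := fun _ => g)
      fun _ => hgm).indepFun hij)
    hident
  have hconv := tendstoInMeasure_iff_dist.mp <| tendstoInMeasure_of_tendsto_ae
    (fun n => ((Finset.measurable_sum _ fun i _ => hgm.comp (measurable_pi_apply i)).div_const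
      _).aestronglyMeasurable) hslln
  refine tendsto_of_tendsto_of_tendsto_of_le_of_le tendsto_const_nhds
    (hconv (∫ x, g x ∂P - c) (sub_pos.mpr hc)) (fun _ => zero_le) fun n => ?_
  rw [← Measure.infinitePi_map_fin, Measure.map_apply (by fun_prop)
    (measurableSet_lt (by fun_prop) measurable_const)]
  refine measure_mono fun ω (hω : ∑ i : Fin n, g (ω i) < n * c) => ?_
  rw [Fin.sum_univ_eq_sum_range (fun i => g (ω i))] at hω
  have hn : (0 : ℝ) < n := by
    rcases Nat.eq_zero_or_pos n with rfl | hn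
    · simp at hω
    · exact_mod_cast hn
  have hlt : (∑ i ∈ Finset.range n, X i ω) / n < c := (div_lt_iff₀ hn).mpr (by linarith)
  change _ ≤ dist ((∑ i ∈ Finset.range n, X i ω) / n) Q[X 0]
  rw [hmean, Real.dist_eq, abs_sub_comm]
  exact (sub_le_sub_left hlt.le _).trans (le_abs_self _)

theorem exists_eventually_le_measure_of_limsup_compl_lt_one {X : ℕ → Type*}
    [∀ n, MeasurableSpace (X n)] (P : ∀ n, Measure (X n)) [∀ n, IsProbabilityMeasure (P n)]
    (s : ∀ n, Set (X n)) (h : limsup (fun n => P n (s n)ᶜ) atTop < 1) :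
    ∃ η : ℝ≥0∞, η ≠ 0 ∧ η ≠ ∞ ∧ ∀ᶠ n in atTop, η ≤ P n (s n) := by
  obtain ⟨u, hu, hu1⟩ := exists_between h
  refine ⟨1 - u, (tsub_pos_of_lt hu1).ne', ne_top_of_le_ne_top ENNReal.one_ne_top tsub_le_self,
    ?_⟩
  filter_upwards [eventually_lt_of_limsup_lt hu] with n hn
  refine tsub_le_iff_right.mpr ((measure_univ_le_add_compl (s n)).trans' ?_ |>.trans
    (add_le_add le_rfl hn.le))
  rw [measure_univ]

theorem le_liminf_inv_mul_log_of_eventually_le {a : ℕ → ℝ≥0∞} {c : ℝ} {δ : ℝ≥0∞}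
    (hδ₀ : δ ≠ 0) (hδ : δ ≠ ∞)
    (h : ∀ᶠ n : ℕ in atTop, ENNReal.ofReal (Real.exp (n * c)) * δ ≤ a n) :
    (c : EReal) ≤ liminf (fun n : ℕ => (((n : ℝ)⁻¹ : ℝ) : EReal) * ENNReal.log (a n)) atTop := by
  have hδr : 0 < δ.toReal := ENNReal.toReal_pos hδ₀ hδ
  have hlim : Tendsto (fun n : ℕ => (((n : ℝ)⁻¹ * (n * c + Real.log δ.toReal) : ℝ) : EReal))
      atTop (𝓝 c) := by
    refine EReal.tendsto_coe.mpr ?_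
    have := (tendsto_inv_atTop_nhds_zero_nat (𝕜 := ℝ)).mul_const (Real.log δ.toReal)
      |>.const_add c
    rw [zero_mul, add_zero] at this
    refine this.congr' ?_
    filter_upwards [eventually_ne_atTop 0] with n hn
    field_simp
  rw [← hlim.liminf_eq]
  refine liminf_le_liminf ?_
  filter_upwards [h] with n hn
  rw [EReal.coe_mul]
  refine mul_le_mul_of_nonneg_left ?_ (EReal.coe_nonneg.mpr (by positivity))
  calc ((n * c + Real.log δ.toReal : ℝ) : EReal)
      = ENNReal.log (ENNReal.ofReal (Real.exp (n * c)) * δ) := by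
        conv_rhs => rw [← ENNReal.ofReal_toReal hδ]
        rw [← ENNReal.ofReal_mul (Real.exp_pos _).le,
          ENNReal.log_ofReal_of_pos (mul_pos (Real.exp_pos _) hδr),
          Real.log_mul (Real.exp_ne_zero _) hδr.ne', Real.log_exp]
    _ ≤ ENNReal.log (a n) := ENNReal.log_monotone hn

theorem coe_le_liminf_inv_mul_log {a : ℕ → ℝ≥0∞} {m : ℝ}
    (h : ∀ c < m, ∃ δ : ℝ≥0∞, δ ≠ 0 ∧ δ ≠ ∞ ∧
      ∀ᶠ n : ℕ in atTop, ENNReal.ofReal (Real.exp (n * c)) * δ ≤ a n) :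
    (m : EReal) ≤ liminf (fun n : ℕ => (((n : ℝ)⁻¹ : ℝ) : EReal) * ENNReal.log (a n)) atTop := by
  refine le_of_forall_lt_imp_le_of_dense fun x hx => ?_
  obtain ⟨c, hxc, hcm⟩ := EReal.exists_between_coe_real hx
  obtain ⟨δ, hδ₀, hδ, hδa⟩ := h c (EReal.coe_lt_coe_iff.mp hcm)
  exact hxc.le.trans (le_liminf_inv_mul_log_of_eventually_le hδ₀ hδ hδa)

end

theorem chapman_robbins_lower_bound_partially_consistent_general
    {𝔜 Θ : Type*} [MeasurableSpace 𝔜]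
    -- A7: dominated model with everywhere positive measurable densities
    (μ : Measure 𝔜)
    (f : Θ → 𝔜 → ℝ)
    (hf_meas : ∀ θ, Measurable (f θ))
    (hf_pos : ∀ θ y, 0 < f θ y)
    (hf_prob : ∀ θ, IsProbabilityMeasure (densModel μ f θ))
    (θ₀ : Θ)
    -- the estimator
    (est : (n : ℕ) → (Fin n → 𝔜) → Θ)
    -- partial consistency: limsup_n ℙ_{θ₁}(θ̃ⁿ ≠ θ₁) < 1 for every θ₁ ≠ θ₀
    (hpartial : ∀ θ₁ : Θ, θ₁ ≠ θ₀ →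
      Filter.limsup
        (fun n : ℕ => (Measure.pi fun _ : Fin n => densModel μ f θ₁)
          {y | est n y ≠ θ₁}) atTop < 1) :
    Filter.liminf
      (fun n : ℕ => (((n : ℝ)⁻¹ : ℝ) : EReal) *
        ENNReal.log ((Measure.pi fun _ : Fin n => densModel μ f θ₀)
          {y | est n y ≠ θ₀}))
      atTop
    ≥ ⨆ (θ₁ : Θ) (_ : θ₁ ≠ θ₀),
        extExp (densModel μ f θ₁) (fun y => Real.log (f θ₀ y / f θ₁ y)) := by
  refine iSup₂_le fun θ₁ hθ₁ => ?_
  have := hf_prob θ₀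
  have := hf_prob θ₁
  set g : 𝔜 → ℝ := fun y => Real.log (f θ₀ y / f θ₁ y)
  have hg : Measurable g := by fun_prop
  have hP₀ : densModel μ f θ₀
      = (densModel μ f θ₁).withDensity fun y => ENNReal.ofReal (Real.exp (g y)) :=
    withDensity_ofReal_eq_withDensity_exp_log_div μ (hf_meas θ₀) (hf_meas θ₁) (hf_pos θ₀)
      (hf_pos θ₁)
  have hpos : ∫⁻ y, ENNReal.ofReal (g y) ∂densModel μ f θ₁ ≠ ∞ :=
    ne_top_of_le_ne_top ENNReal.one_ne_top <|
      (lintegral_ofReal_le_withDensity_exp_univ _ g).trans_eq (by rw [← hP₀, measure_univ])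
  refine extExp_le_of_integrable_imp hg.aemeasurable hpos fun hgi => ?_
  refine coe_le_liminf_inv_mul_log fun c hc => ?_
  obtain ⟨η, hη, hη_top, hcorrect⟩ := exists_eventually_le_measure_of_limsup_compl_lt_one
    (fun n => Measure.pi fun _ : Fin n => densModel μ f θ₁) (fun n => {y | est n y = θ₁})
    (hpartial θ₁ hθ₁)
  refine ⟨η / 2, (ENNReal.half_pos hη).ne', ENNReal.div_ne_top hη_top two_ne_zero, ?_⟩
  filter_upwards [hcorrect, (tendsto_order.1
    (tendsto_measure_pi_sum_lt_of_lt_integral _ hg hgi hc)).2 _ (ENNReal.half_pos hη)]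
    with n hcorrect hdev
  calc ENNReal.ofReal (Real.exp (n * c)) * (η / 2)
      ≤ ENNReal.ofReal (Real.exp (n * c)) *
          ((Measure.pi fun _ => densModel μ f θ₁) {y | est n y = θ₁} -
            (Measure.pi fun _ => densModel μ f θ₁) {y | ∑ i, g (y i) < n * c}) := by
        gcongr
        rw [← ENNReal.sub_half hη_top]
        exact tsub_le_tsub hcorrect hdev.le
    _ ≤ (Measure.pi fun _ => densModel μ f θ₀) {y | est n y = θ₁} :=
        ofReal_exp_mul_sub_le_pi_of_eq_withDensity hg hP₀ _ _
    _ ≤ _ := measure_mono fun y (hy : est n y = θ₁) => (hy.trans_ne hθ₁ : est n y ≠ θ₀)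

/-- **Chapman–Robbins type lower bound under a partial consistency condition**
(Proposition 6, second part).  Under Assumptions A7 and A9, if the estimator `θ̃ⁿ`
satisfies `limsup ℙ_{θ₁}(θ̃ⁿ ≠ θ₁) < 1` for every `θ₁ ≠ θ₀` (data i.i.d. with law
`ℙ_{θ₁}`), then
`liminf (1/n) ln ℙ_{θ₀}(θ̃ⁿ ≠ θ₀) ≥ sup_{θ₁ ≠ θ₀} E_{θ₁} ln(f(Y;θ₀)/f(Y;θ₁))`. -/
theorem chapman_robbins_lower_bound_partially_consistent
    {𝔜 Θ : Type*} [MeasurableSpace 𝔜]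
    [Fintype Θ] [Nonempty Θ] [MeasurableSpace Θ] [MeasurableSingletonClass Θ]
    -- A7: dominated model with everywhere positive measurable densities
    (μ : Measure 𝔜) [SigmaFinite μ]
    (f : Θ → 𝔜 → ℝ)
    (hf_meas : ∀ θ, Measurable (f θ))
    (hf_pos : ∀ θ y, 0 < f θ y)
    (hf_prob : ∀ θ, IsProbabilityMeasure (densModel μ f θ))
    -- A9: the true value θ₀ is the unique maximizer of θ ↦ E_{θ₀} ln f(Y; θ)
    (θ₀ : Θ)
    (hA9 : ∀ θ, θ ≠ θ₀ →
      ∫ y, Real.log (f θ y) ∂(densModel μ f θ₀) <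
        ∫ y, Real.log (f θ₀ y) ∂(densModel μ f θ₀))
    -- the estimator
    (est : (n : ℕ) → (Fin n → 𝔜) → Θ)
    (hest_meas : ∀ n, Measurable (est n))
    -- partial consistency: limsup_n ℙ_{θ₁}(θ̃ⁿ ≠ θ₁) < 1 for every θ₁ ≠ θ₀
    (hpartial : ∀ θ₁ : Θ, θ₁ ≠ θ₀ →
      Filter.limsup
        (fun n : ℕ => (Measure.pi fun _ : Fin n => densModel μ f θ₁)
          {y | est n y ≠ θ₁}) atTop < 1) :
    Filter.liminf
      (fun n : ℕ => (((n : ℝ)⁻¹ : ℝ) : EReal) *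
        ENNReal.log ((Measure.pi fun _ : Fin n => densModel μ f θ₀)
          {y | est n y ≠ θ₀}))
      atTop
    ≥ ⨆ (θ₁ : Θ) (_ : θ₁ ≠ θ₀),
        extExp (densModel μ f θ₁) (fun y => Real.log (f θ₀ y / f θ₁ y)) :=
  chapman_robbins_lower_bound_partially_consistent_general μ f hf_meas hf_pos hf_prob θ₀ est
    hpartial
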